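/- arXiv:1311.5301 — 2 statements merged into one kernel-verified Lean document; each statement's English description precedes it below -/
import Mathlib

section
/- Let γ > 0 and let p and q be probability densities on ℝ^k with ∫p^{1+γ}, ∫q^{1+γ}, ∫p q^γ finite and ∫p^{1+γ} > 0, ∫q^{1+γ} > 0. If S_sphere(p,q) = S_sphere(p,p), then p = q almost everywhere. That is, the pseudo-spherical score is strictly proper on the set of probability densities. -/
/-!
Write `A = ∫ p^(1+γ)`, `B = ∫ q^(1+γ)`. Since `S(p, p) = -A^(1/(1+γ))`, equality of the scores says
`∫ p q^γ = A^(1/(1+γ)) B^(γ/(1+γ))`, i.e. equality in Hölder's inequality with exponents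
`1 + γ` and `(1 + γ)/γ`. For the normalised functions `f = p / A^(1/(1+γ))`, `g = q / B^(1/(1+γ))`
the Young defect `f^(1+γ)/(1+γ) + γ g^(1+γ)/(1+γ) - f g^γ` is nonnegative with integral zero, so it
vanishes almost everywhere, and the equality case of Young's inequality gives `f = g` a.e.
Hence `p` is a constant multiple of `q`, and the constant is `1` because both integrate to `1`.
-/

open MeasureTheory

namespace Real

variable {γ u v : ℝ}

theorem holderConjugate_one_add_div (hγ : 0 < γ) : (1 + γ).HolderConjugate ((1 + γ) / γ) := by
  rw [holderConjugate_iff_eq_conjExponent (by linarith), add_sub_cancel_left]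

theorem rpow_rpow_one_add_div (hγ : 0 < γ) (hv : 0 ≤ v) :
    (v ^ γ) ^ ((1 + γ) / γ) = v ^ (1 + γ) := by
  rw [← rpow_mul hv, mul_div_cancel₀ _ hγ.ne']

theorem mul_rpow_le_young (hγ : 0 < γ) (hu : 0 ≤ u) (hv : 0 ≤ v) :
    u * v ^ γ ≤ u ^ (1 + γ) / (1 + γ) + v ^ (1 + γ) / ((1 + γ) / γ) := by
  simpa only [rpow_rpow_one_add_div hγ hv] using
    young_inequality_of_nonneg hu (rpow_nonneg hv γ) (holderConjugate_one_add_div hγ)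

theorem mul_rpow_eq_young_iff (hγ : 0 < γ) (hu : 0 ≤ u) (hv : 0 ≤ v) :
    u * v ^ γ = u ^ (1 + γ) / (1 + γ) + v ^ (1 + γ) / ((1 + γ) / γ) ↔ u = v := by
  rw [← rpow_rpow_one_add_div hγ hv,
    young_inequality_eq_iff_of_nonneg hu (rpow_nonneg hv γ) (holderConjugate_one_add_div hγ),
    rpow_rpow_one_add_div hγ hv, rpow_left_inj hu hv (by linarith)]

theorem div_rpow_inv_rpow {x a r : ℝ} (hx : 0 ≤ x) (ha : 0 ≤ a) (hr : r ≠ 0) :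
    (x / a ^ r⁻¹) ^ r = x ^ r / a := by
  rw [div_rpow hx (rpow_nonneg ha _), rpow_inv_rpow ha hr]

end Real

section Holder

variable {α : Type*} [MeasurableSpace α] {μ : Measure α} {γ : ℝ} {f g : α → ℝ}

theorem ae_eq_of_integral_mul_rpow_eq_one (hγ : 0 < γ) (hf : ∀ x, 0 ≤ f x) (hg : ∀ x, 0 ≤ g x)
    (hfi : Integrable (fun x => f x ^ (1 + γ)) μ) (hgi : Integrable (fun x => g x ^ (1 + γ)) μ)
    (hfgi : Integrable (fun x => f x * g x ^ γ) μ)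
    (hf1 : ∫ x, f x ^ (1 + γ) ∂μ = 1) (hg1 : ∫ x, g x ^ (1 + γ) ∂μ = 1)
    (hfg : ∫ x, f x * g x ^ γ ∂μ = 1) :
    f =ᵐ[μ] g := by
  set defect : α → ℝ := fun x =>
    f x ^ (1 + γ) / (1 + γ) + g x ^ (1 + γ) / ((1 + γ) / γ) - f x * g x ^ γ
  have defect_nonneg : 0 ≤ defect := fun x =>
    sub_nonneg.2 (Real.mul_rpow_le_young hγ (hf x) (hg x))
  have hfi' : Integrable (fun x => f x ^ (1 + γ) / (1 + γ)) μ := hfi.div_const _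
  have hgi' : Integrable (fun x => g x ^ (1 + γ) / ((1 + γ) / γ)) μ := hgi.div_const _
  have hsum : Integrable (fun x => f x ^ (1 + γ) / (1 + γ) + g x ^ (1 + γ) / ((1 + γ) / γ)) μ :=
    hfi'.add hgi'
  have defect_integrable : Integrable defect μ := hsum.sub hfgi
  have integral_defect : ∫ x, defect x ∂μ = 0 := by
    rw [integral_sub hsum hfgi, integral_add hfi' hgi', integral_div, integral_div,
      hf1, hg1, hfg, one_div, one_div, (Real.holderConjugate_one_add_div hγ).inv_add_inv_eq_one,
      sub_self]
  filter_upwards [(integral_eq_zero_iff_of_nonneg defect_nonneg defect_integrable).1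
    integral_defect] with x hx
  exact (Real.mul_rpow_eq_young_iff hγ (hf x) (hg x)).1 (sub_eq_zero.1 hx).symm

/-- Equality case of Hölder's inequality for the exponents `1 + γ` and `(1 + γ) / γ`. -/
theorem exists_ae_eq_const_mul_of_integral_mul_rpow_eq (hγ : 0 < γ) (hf : ∀ x, 0 ≤ f x)
    (hg : ∀ x, 0 ≤ g x) (hfi : Integrable (fun x => f x ^ (1 + γ)) μ)
    (hgi : Integrable (fun x => g x ^ (1 + γ)) μ) (hfgi : Integrable (fun x => f x * g x ^ γ) μ)
    (hfpos : 0 < ∫ x, f x ^ (1 + γ) ∂μ) (hgpos : 0 < ∫ x, g x ^ (1 + γ) ∂μ)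
    (hfg : ∫ x, f x * g x ^ γ ∂μ =
      (∫ x, f x ^ (1 + γ) ∂μ) ^ (1 + γ)⁻¹ * ((∫ x, g x ^ (1 + γ) ∂μ) ^ (1 + γ)⁻¹) ^ γ) :
    ∃ c : ℝ, f =ᵐ[μ] fun x => c * g x := by
  set A := ∫ x, f x ^ (1 + γ) ∂μ
  set B := ∫ x, g x ^ (1 + γ) ∂μ
  have hγ' : 1 + γ ≠ 0 := by linarith
  have ha : 0 < A ^ (1 + γ)⁻¹ := Real.rpow_pos_of_pos hfpos _
  have hb : 0 < B ^ (1 + γ)⁻¹ := Real.rpow_pos_of_pos hgpos _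
  have hf' : (fun x => (f x / A ^ (1 + γ)⁻¹) ^ (1 + γ)) = fun x => f x ^ (1 + γ) / A :=
    funext fun x => Real.div_rpow_inv_rpow (hf x) hfpos.le hγ'
  have hg' : (fun x => (g x / B ^ (1 + γ)⁻¹) ^ (1 + γ)) = fun x => g x ^ (1 + γ) / B :=
    funext fun x => Real.div_rpow_inv_rpow (hg x) hgpos.le hγ'
  have hfg' : (fun x => f x / A ^ (1 + γ)⁻¹ * (g x / B ^ (1 + γ)⁻¹) ^ γ) =
      fun x => f x * g x ^ γ / (A ^ (1 + γ)⁻¹ * (B ^ (1 + γ)⁻¹) ^ γ) := by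
    funext x
    rw [Real.div_rpow (hg x) hb.le, div_mul_div_comm]
  have hnormalized := ae_eq_of_integral_mul_rpow_eq_one hγ
    (fun x => div_nonneg (hf x) ha.le) (fun x => div_nonneg (hg x) hb.le)
    (hf' ▸ hfi.div_const A) (hg' ▸ hgi.div_const B) (hfg' ▸ hfgi.div_const _)
    (by rw [hf', integral_div, div_self hfpos.ne']) (by rw [hg', integral_div, div_self hgpos.ne'])
    (by rw [hfg', integral_div, ← hfg, div_self (hfg ▸ by positivity)])
  refine ⟨A ^ (1 + γ)⁻¹ / B ^ (1 + γ)⁻¹, ?_⟩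
  filter_upwards [hnormalized] with x hx
  rw [div_eq_div_iff ha.ne' hb.ne'] at hx
  rw [div_mul_eq_mul_div, eq_div_iff hb.ne', hx, mul_comm]

theorem ae_eq_of_ae_eq_const_mul_of_integral_eq_one {c : ℝ} (h : f =ᵐ[μ] fun x => c * g x)
    (hf1 : ∫ x, f x ∂μ = 1) (hg1 : ∫ x, g x ∂μ = 1) : f =ᵐ[μ] g := by
  have hc : c = 1 := by
    rw [← hf1, integral_congr_ae h, integral_const_mul, hg1, mul_one]
  simpa only [hc, one_mul] using h

end Holder

section PseudoSpherical

variable {α : Type*} [MeasurableSpace α] {μ : Measure α} {γ : ℝ} {f g : α → ℝ}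

noncomputable def pseudoSphericalScore (μ : Measure α) (γ : ℝ) (f g : α → ℝ) : ℝ :=
  -(∫ x, f x * g x ^ γ ∂μ) / (∫ x, g x ^ (1 + γ) ∂μ) ^ (γ / (1 + γ))

theorem pseudoSphericalScore_self (hγ : 0 < γ) (hf : ∀ x, 0 ≤ f x)
    (hfpos : 0 < ∫ x, f x ^ (1 + γ) ∂μ) :
    pseudoSphericalScore μ γ f f = -(∫ x, f x ^ (1 + γ) ∂μ) ^ (1 + γ)⁻¹ := by
  have hγ' : 1 + γ ≠ 0 := by linarith
  have hexp : (1 + γ)⁻¹ = 1 - γ / (1 + γ) := by field_simp; ring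
  simp only [pseudoSphericalScore, ← Real.rpow_one_add' (hf _) hγ']
  rw [hexp, Real.rpow_sub hfpos, Real.rpow_one, neg_div]

theorem integral_mul_rpow_eq_of_pseudoSphericalScore_eq (hγ : 0 < γ) (hf : ∀ x, 0 ≤ f x)
    (hfpos : 0 < ∫ x, f x ^ (1 + γ) ∂μ) (hgpos : 0 < ∫ x, g x ^ (1 + γ) ∂μ)
    (h : pseudoSphericalScore μ γ f g = pseudoSphericalScore μ γ f f) :
    ∫ x, f x * g x ^ γ ∂μ =
      (∫ x, f x ^ (1 + γ) ∂μ) ^ (1 + γ)⁻¹ * ((∫ x, g x ^ (1 + γ) ∂μ) ^ (1 + γ)⁻¹) ^ γ := by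
  rw [pseudoSphericalScore_self hγ hf hfpos, pseudoSphericalScore, neg_div, neg_inj,
    div_eq_iff (Real.rpow_pos_of_pos hgpos _).ne'] at h
  rw [h, ← Real.rpow_mul hgpos.le, inv_mul_eq_div]

end PseudoSpherical

theorem pseudo_spherical_score_strictly_proper_on_densities_general
    {k : ℕ} (γ : ℝ) (hγ : 0 < γ)
    (p q : (Fin k → ℝ) → ℝ)
    (hp0 : ∀ x, 0 ≤ p x) (hq0 : ∀ x, 0 ≤ q x)
    (hp1 : (∫ x, p x) = 1) (hq1 : (∫ x, q x) = 1)
    (hpint : Integrable (fun x => p x ^ (1 + γ)))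
    (hqint : Integrable (fun x => q x ^ (1 + γ)))
    (hpqint : Integrable (fun x => p x * q x ^ γ))
    (hppos : 0 < ∫ x, p x ^ (1 + γ))
    (hqpos : 0 < ∫ x, q x ^ (1 + γ))
    (heq : -(∫ x, p x * q x ^ γ) / (∫ x, q x ^ (1 + γ)) ^ (γ / (1 + γ)) =
        -(∫ x, p x * p x ^ γ) / (∫ x, p x ^ (1 + γ)) ^ (γ / (1 + γ))) :
    p =ᵐ[volume] q := by
  have holder_eq :=
    integral_mul_rpow_eq_of_pseudoSphericalScore_eq (μ := volume) hγ hp0 hppos hqpos heq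
  obtain ⟨c, hc⟩ := exists_ae_eq_const_mul_of_integral_mul_rpow_eq hγ hp0 hq0 hpint hqint hpqint
    hppos hqpos holder_eq
  exact ae_eq_of_ae_eq_const_mul_of_integral_eq_one hc hp1 hq1

/-- The pseudo-spherical score is strictly proper on probability densities:
for probability densities `p, q` on `ℝ^k`, if `S_sphere(p,q) = S_sphere(p,p)` then
`p = q` almost everywhere. -/
theorem pseudo_spherical_score_strictly_proper_on_densities
    {k : ℕ} (γ : ℝ) (hγ : 0 < γ)
    (p q : (Fin k → ℝ) → ℝ)
    (hpm : Measurable p) (hqm : Measurable q)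
    (hp0 : ∀ x, 0 ≤ p x) (hq0 : ∀ x, 0 ≤ q x)
    (hpi : Integrable p) (hqi : Integrable q)
    (hp1 : (∫ x, p x) = 1) (hq1 : (∫ x, q x) = 1)
    (hpint : Integrable (fun x => p x ^ (1 + γ)))
    (hqint : Integrable (fun x => q x ^ (1 + γ)))
    (hpqint : Integrable (fun x => p x * q x ^ γ))
    (hppos : 0 < ∫ x, p x ^ (1 + γ))
    (hqpos : 0 < ∫ x, q x ^ (1 + γ))
    (heq : -(∫ x, p x * q x ^ γ) / (∫ x, q x ^ (1 + γ)) ^ (γ / (1 + γ)) =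
        -(∫ x, p x * p x ^ γ) / (∫ x, p x ^ (1 + γ)) ^ (γ / (1 + γ))) :
    p =ᵐ[volume] q :=
  pseudo_spherical_score_strictly_proper_on_densities_general γ hγ p q hp0 hq0 hp1 hq1 hpint hqint
    hpqint hppos hqpos heq
end

section
/- Let γ > 0, let s be a probability density on ℝ with mean 0, variance 1 and ∫s^{1+γ} ∈ (0,∞), let q be a probability density on ℝ^m, let c₀ : ℝ^m → (0,1] be measurable, and consider the location-scale family p_θ(y|x) = (1/σ)s((y − f_β(x))/σ) for θ = (β,σ), σ > 0. Suppose the target density is p₀ = p_{θ₀} for some θ₀ = (β₀, σ₀). Then for every c > 0 and every θ = (β, σ), the conditional density-power score satisfies S_power(c₀p₀, c·p_θ; q) ≥ −(∫c₀(x)q(x)dx)^{1+γ}·σ₀^{−γ}·∫s(z)^{1+γ}dz, and equality holds at θ = θ₀ and c = ∫c₀(x)q(x)dx; that is, (c,θ) = (∫c₀ q dx, θ₀) is an optimal solution of minimizing S_power(c₀p₀, c·p_θ; q) over c > 0, θ ∈ Θ. -/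
open MeasureTheory

/-!
Integrate out `y` first. The self term of the score is `c^{1+γ} σ^{-γ} ∫ s^{1+γ}` for every `x`, and
by Hölder's inequality with exponents `1 + γ` and `(1 + γ)/γ` the inner cross integral
`∫ p₀(y|x) p_θ(y|x)^γ dy` is at most `‖p₀‖_{1+γ} ‖p_θ‖_{1+γ}^γ`, again independent of `x`.
With `c_E = ∫ c₀ q`, `a = c_E ‖p₀‖_{1+γ}` and `b = c ‖p_θ‖_{1+γ}`, the score is therefore at least
`γ b^{1+γ} - (1+γ) a b^γ`, which Young's inequality bounds below by `-a^{1+γ}`. At `(c_E, θ₀)`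
both inequalities are equalities.
-/

noncomputable def locScale (s : ℝ → ℝ) (a σ y : ℝ) : ℝ := σ⁻¹ * s ((y - a) / σ)

section LocationScale

variable {s : ℝ → ℝ} {a σ r : ℝ}

lemma locScale_nonneg (hs0 : ∀ z, 0 ≤ s z) (hσ : 0 < σ) (y : ℝ) : 0 ≤ locScale s a σ y :=
  mul_nonneg (inv_nonneg.mpr hσ.le) (hs0 _)

lemma measurable_locScale (hsm : Measurable s) : Measurable (locScale s a σ) :=
  (hsm.comp ((measurable_id.sub_const a).div_const σ)).const_mul σ⁻¹

lemma locScale_rpow (hs0 : ∀ z, 0 ≤ s z) (hσ : 0 < σ) (y : ℝ) :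
    locScale s a σ y ^ r = σ ^ (-r) * s ((y - a) / σ) ^ r := by
  rw [locScale, Real.mul_rpow (inv_nonneg.mpr hσ.le) (hs0 _), Real.inv_rpow hσ.le,
    ← Real.rpow_neg hσ.le]

lemma integrable_locScale_rpow (hs0 : ∀ z, 0 ≤ s z) (hsr : Integrable (fun z => s z ^ r))
    (hσ : 0 < σ) : Integrable (fun y => locScale s a σ y ^ r) := by
  simp_rw [locScale_rpow hs0 hσ]
  exact ((hsr.comp_div hσ.ne').comp_sub_right a).const_mul _

lemma integral_locScale_rpow (hs0 : ∀ z, 0 ≤ s z) (hσ : 0 < σ) :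
    ∫ y, locScale s a σ y ^ r = σ ^ (1 - r) * ∫ z, s z ^ r := by
  simp_rw [locScale_rpow hs0 hσ]
  rw [integral_const_mul, integral_sub_right_eq_self (fun y => s (y / σ) ^ r) a,
    Measure.integral_comp_div (fun z => s z ^ r), abs_of_pos hσ, smul_eq_mul, ← mul_assoc,
    ← Real.rpow_add_one hσ.ne', neg_add_eq_sub]

end LocationScale

lemma Real.holderConjugate_one_add_div_s19 {γ : ℝ} (hγ : 0 < γ) :
    (1 + γ).HolderConjugate ((1 + γ) / γ) := by
  convert Real.HolderConjugate.conjExponent (p := 1 + γ) (by linarith) using 1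
  rw [Real.conjExponent, add_sub_cancel_left]

lemma memLp_ofReal_of_integrable_rpow {α : Type*} [MeasurableSpace α] {μ : Measure α}
    {f : α → ℝ} {p : ℝ} (hp : 0 < p) (hf0 : 0 ≤ f) (hfm : AEStronglyMeasurable f μ)
    (hf : Integrable (fun x => f x ^ p) μ) : MemLp f (ENNReal.ofReal p) μ := by
  rw [← integrable_norm_rpow_iff hfm (ENNReal.ofReal_pos.mpr hp).ne' ENNReal.ofReal_ne_top,
    ENNReal.toReal_ofReal hp.le]
  simpa only [Real.norm_of_nonneg (hf0 _)] using hf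

lemma integral_mul_rpow_le {α : Type*} [MeasurableSpace α] {μ : Measure α} {γ : ℝ} (hγ : 0 < γ)
    {f g : α → ℝ} (hf0 : 0 ≤ f) (hg0 : 0 ≤ g) (hfm : AEStronglyMeasurable f μ)
    (hgm : AEStronglyMeasurable g μ) (hf : Integrable (fun x => f x ^ (1 + γ)) μ)
    (hg : Integrable (fun x => g x ^ (1 + γ)) μ) :
    ∫ x, f x * g x ^ γ ∂μ ≤
      (∫ x, f x ^ (1 + γ) ∂μ) ^ (1 / (1 + γ)) * (∫ x, g x ^ (1 + γ) ∂μ) ^ (γ / (1 + γ)) := by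
  have hgγ : ∀ x, (g x ^ γ) ^ ((1 + γ) / γ) = g x ^ (1 + γ) := fun x => by
    rw [← Real.rpow_mul (hg0 x), mul_div_cancel₀ _ hγ.ne']
  have hgγ0 : 0 ≤ fun x => g x ^ γ := fun x => Real.rpow_nonneg (hg0 x) γ
  have holder := integral_mul_le_Lp_mul_Lq_of_nonneg (Real.holderConjugate_one_add_div_s19 hγ)
    (ae_of_all _ hf0) (ae_of_all _ hgγ0)
    (memLp_ofReal_of_integrable_rpow (by linarith) hf0 hfm hf)
    (memLp_ofReal_of_integrable_rpow (by positivity) hgγ0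
      (hgm.aemeasurable.pow_const γ).aestronglyMeasurable (by simpa only [hgγ] using hg))
  simpa only [hgγ, one_div_div] using holder

lemma integral_locScale_mul_rpow_le {s : ℝ → ℝ} {γ a b σ τ : ℝ} (hγ : 0 < γ) (hsm : Measurable s)
    (hs0 : ∀ z, 0 ≤ s z) (hsint : Integrable (fun z => s z ^ (1 + γ))) (hτ : 0 < τ)
    (hσ : 0 < σ) :
    ∫ y, locScale s b τ y * locScale s a σ y ^ γ ≤
      (τ ^ (-γ) * ∫ z, s z ^ (1 + γ)) ^ (1 / (1 + γ)) *
        (σ ^ (-γ) * ∫ z, s z ^ (1 + γ)) ^ (γ / (1 + γ)) := by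
  have holder := integral_mul_rpow_le (f := locScale s b τ) (g := locScale s a σ) hγ
    (locScale_nonneg hs0 hτ) (locScale_nonneg hs0 hσ)
    (measurable_locScale hsm).aestronglyMeasurable (measurable_locScale hsm).aestronglyMeasurable
    (integrable_locScale_rpow hs0 hsint hτ) (integrable_locScale_rpow hs0 hsint hσ)
  rwa [integral_locScale_rpow hs0 hτ, integral_locScale_rpow hs0 hσ, sub_add_cancel_left]
    at holder

section Fiber

variable {α β : Type*} [MeasurableSpace α] [MeasurableSpace β] {μ : Measure α} {ν : Measure β}
  [SFinite μ] [SFinite ν] {w : α → ℝ} {k : α × β → ℝ} {K : ℝ}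

lemma integral_prod_mul_eq_of_integral_fiber (hwk : Integrable (fun z => w z.1 * k z) (μ.prod ν))
    (hk : ∀ x, ∫ y, k (x, y) ∂ν = K) : ∫ z, w z.1 * k z ∂μ.prod ν = (∫ x, w x ∂μ) * K := by
  rw [integral_prod _ hwk, ← integral_mul_const]
  simp_rw [integral_const_mul, hk]

lemma integral_prod_mul_le_of_integral_fiber (hwk : Integrable (fun z => w z.1 * k z) (μ.prod ν))
    (hw : Integrable w μ) (hw0 : 0 ≤ᵐ[μ] w) (hk : ∀ x, ∫ y, k (x, y) ∂ν ≤ K) :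
    ∫ z, w z.1 * k z ∂μ.prod ν ≤ (∫ x, w x ∂μ) * K := by
  rw [integral_prod _ hwk, ← integral_mul_const]
  refine integral_mono_ae hwk.integral_prod_left (hw.mul_const K) ?_
  filter_upwards [hw0] with x hx
  rw [integral_const_mul]
  exact mul_le_mul_of_nonneg_left (hk x) hx

end Fiber

lemma one_add_mul_mul_rpow_le {γ a b : ℝ} (hγ : 0 < γ) (ha : 0 ≤ a) (hb : 0 ≤ b) :
    (1 + γ) * (a * b ^ γ) ≤ a ^ (1 + γ) + γ * b ^ (1 + γ) := by
  have young := Real.young_inequality_of_nonneg ha (Real.rpow_nonneg hb γ)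
    (Real.holderConjugate_one_add_div_s19 hγ)
  rw [← Real.rpow_mul hb, mul_div_cancel₀ _ hγ.ne'] at young
  calc (1 + γ) * (a * b ^ γ)
      ≤ (1 + γ) * (a ^ (1 + γ) / (1 + γ) + b ^ (1 + γ) / ((1 + γ) / γ)) := by gcongr
    _ = a ^ (1 + γ) + γ * b ^ (1 + γ) := by field_simp

lemma mul_rpow_one_div_rpow {p x y : ℝ} (hp : p ≠ 0) (hx : 0 ≤ x) (hy : 0 ≤ y) :
    (x * y ^ (1 / p)) ^ p = x ^ p * y := by
  rw [Real.mul_rpow hx (Real.rpow_nonneg hy _), one_div, Real.rpow_inv_rpow hy hp]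

lemma neg_le_power_score_of_le {γ c k X X₀ B : ℝ} (hγ : 0 < γ) (hc : 0 ≤ c) (hk : 0 ≤ k)
    (hX : 0 ≤ X) (hX₀ : 0 ≤ X₀) (hB : B ≤ c ^ γ * (k * (X₀ ^ (1 / (1 + γ)) * X ^ (γ / (1 + γ))))) :
    -(k ^ (1 + γ) * X₀) ≤ γ * (c ^ (1 + γ) * X) - (1 + γ) * B := by
  have young := one_add_mul_mul_rpow_le hγ (mul_nonneg hk (Real.rpow_nonneg hX₀ (1 / (1 + γ))))
    (mul_nonneg hc (Real.rpow_nonneg hX (1 / (1 + γ))))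
  have hγ1 : 1 + γ ≠ 0 := by positivity
  rw [mul_rpow_one_div_rpow hγ1 hk hX₀, mul_rpow_one_div_rpow hγ1 hc hX,
    Real.mul_rpow hc (Real.rpow_nonneg hX _), ← Real.rpow_mul hX, one_div_mul_eq_div] at young
  have hB' : (1 + γ) * B ≤ (1 + γ) * (c ^ γ * (k * (X₀ ^ (1 / (1 + γ)) * X ^ (γ / (1 + γ))))) := by
    gcongr
  linarith

section ConditionalLocationScale

variable {α : Type*} [MeasurableSpace α] {μ : Measure α} [SFinite μ] {s : ℝ → ℝ}
  {w q c₀ f f₀ : α → ℝ} {γ c σ σ₀ r : ℝ}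

lemma integral_prod_mul_smul_locScale_rpow (hs0 : ∀ z, 0 ≤ s z) (hc : 0 ≤ c) (hσ : 0 < σ)
    (hint : Integrable (fun z => w z.1 * locScale s (f z.1) σ z.2 ^ r) (μ.prod volume)) :
    ∫ z, w z.1 * (c * locScale s (f z.1) σ z.2) ^ r ∂μ.prod volume =
      c ^ r * ((∫ x, w x ∂μ) * (σ ^ (1 - r) * ∫ y, s y ^ r)) := by
  have hscale : ∀ z : α × ℝ, w z.1 * (c * locScale s (f z.1) σ z.2) ^ r =
      c ^ r * (w z.1 * locScale s (f z.1) σ z.2 ^ r) := fun z => by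
    rw [Real.mul_rpow hc (locScale_nonneg hs0 hσ _)]; ring
  simp_rw [hscale, integral_const_mul]
  rw [integral_prod_mul_eq_of_integral_fiber hint fun x => integral_locScale_rpow (a := f x) hs0 hσ]

lemma integral_prod_cross_locScale_le (hγ : 0 < γ) (hsm : Measurable s) (hs0 : ∀ z, 0 ≤ s z)
    (hsint : Integrable (fun z => s z ^ (1 + γ))) (hc : 0 ≤ c) (hσ₀ : 0 < σ₀) (hσ : 0 < σ)
    (hw0 : ∀ x, 0 ≤ c₀ x * q x) (hw : Integrable (fun x => c₀ x * q x) μ)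
    (hint : Integrable (fun z => c₀ z.1 * locScale s (f₀ z.1) σ₀ z.2 * q z.1 *
      locScale s (f z.1) σ z.2 ^ γ) (μ.prod volume)) :
    ∫ z, c₀ z.1 * locScale s (f₀ z.1) σ₀ z.2 * q z.1 * (c * locScale s (f z.1) σ z.2) ^ γ
        ∂μ.prod volume ≤
      c ^ γ * ((∫ x, c₀ x * q x ∂μ) * ((σ₀ ^ (-γ) * ∫ y, s y ^ (1 + γ)) ^ (1 / (1 + γ)) *
        (σ ^ (-γ) * ∫ y, s y ^ (1 + γ)) ^ (γ / (1 + γ)))) := by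
  have hscale : ∀ z : α × ℝ,
      c₀ z.1 * locScale s (f₀ z.1) σ₀ z.2 * q z.1 * (c * locScale s (f z.1) σ z.2) ^ γ =
        c ^ γ * ((c₀ z.1 * q z.1) * (locScale s (f₀ z.1) σ₀ z.2 * locScale s (f z.1) σ z.2 ^ γ)) :=
    fun z => by rw [Real.mul_rpow hc (locScale_nonneg hs0 hσ _)]; ring
  simp_rw [hscale, integral_const_mul]
  gcongr
  exact integral_prod_mul_le_of_integral_fiber (hint.congr (ae_of_all _ fun z => by ring)) hw
    (ae_of_all _ hw0) fun x =>
      integral_locScale_mul_rpow_le (a := f x) (b := f₀ x) hγ hsm hs0 hsint hσ₀ hσ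

lemma integral_prod_cross_locScale_self (hγ : 1 + γ ≠ 0) (hs0 : ∀ z, 0 ≤ s z) (hc : 0 ≤ c)
    (hσ : 0 < σ) (hint : Integrable (fun z => c₀ z.1 * locScale s (f z.1) σ z.2 * q z.1 *
      locScale s (f z.1) σ z.2 ^ γ) (μ.prod volume)) :
    ∫ z, c₀ z.1 * locScale s (f z.1) σ z.2 * q z.1 * (c * locScale s (f z.1) σ z.2) ^ γ
        ∂μ.prod volume =
      c ^ γ * ((∫ x, c₀ x * q x ∂μ) * (σ ^ (-γ) * ∫ y, s y ^ (1 + γ))) := by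
  have hpow : ∀ z : α × ℝ, locScale s (f z.1) σ z.2 ^ (1 + γ) =
      locScale s (f z.1) σ z.2 * locScale s (f z.1) σ z.2 ^ γ := fun z =>
    Real.rpow_one_add' (locScale_nonneg hs0 hσ _) hγ
  have hscale : ∀ z : α × ℝ,
      c₀ z.1 * locScale s (f z.1) σ z.2 * q z.1 * (c * locScale s (f z.1) σ z.2) ^ γ =
        c ^ γ * ((c₀ z.1 * q z.1) * locScale s (f z.1) σ z.2 ^ (1 + γ)) :=
    fun z => by rw [Real.mul_rpow hc (locScale_nonneg hs0 hσ _), hpow]; ring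
  simp_rw [hscale, integral_const_mul]
  rw [integral_prod_mul_eq_of_integral_fiber (w := fun x => c₀ x * q x)
    (k := fun z => locScale s (f z.1) σ z.2 ^ (1 + γ))
    (hint.congr (ae_of_all _ fun z => by simp only [hpow]; ring))
    fun x => integral_locScale_rpow (a := f x) hs0 hσ, sub_add_cancel_left]

end ConditionalLocationScale

theorem heterogeneous_location_scale_optimal_solution_general
    {m d : ℕ} (γ : ℝ) (hγ : 0 < γ)
    (s : ℝ → ℝ) (hsm : Measurable s) (hs0 : ∀ z, 0 ≤ s z)
    (hsint : Integrable (fun z => s z ^ (1 + γ)))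
    (q : (Fin m → ℝ) → ℝ)
    (hq0 : ∀ x, 0 ≤ q x)
    (hq1 : (∫ x, q x) = 1)
    (c₀ : (Fin m → ℝ) → ℝ)
    (hc₀ : ∀ x, c₀ x ∈ Set.Ioc (0 : ℝ) 1)
    (hc₀qint : Integrable (fun x => c₀ x * q x))
    (F : (Fin d → ℝ) → (Fin m → ℝ) → ℝ)
    (β₀ : Fin d → ℝ) (σ₀ : ℝ) (hσ₀ : 0 < σ₀)
    (P : (Fin d → ℝ) → ℝ → ((Fin m → ℝ) × ℝ) → ℝ)
    (hP : ∀ β σ z, P β σ z = σ⁻¹ * s ((z.2 - F β z.1) / σ))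
    (hint1 : ∀ β σ, 0 < σ →
      Integrable (fun z : (Fin m → ℝ) × ℝ => q z.1 * P β σ z ^ (1 + γ)))
    (hint2 : ∀ β σ, 0 < σ →
      Integrable (fun z : (Fin m → ℝ) × ℝ =>
        c₀ z.1 * P β₀ σ₀ z * q z.1 * P β σ z ^ γ))
    (cE : ℝ) (hcE : cE = ∫ x, c₀ x * q x) :
    (∀ c : ℝ, 0 < c → ∀ β : Fin d → ℝ, ∀ σ : ℝ, 0 < σ →
      -(cE ^ (1 + γ) * σ₀ ^ (-γ) * (∫ z : ℝ, s z ^ (1 + γ))) ≤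
        γ * (∫ z, q z.1 * (c * P β σ z) ^ (1 + γ)) -
          (1 + γ) * (∫ z, c₀ z.1 * P β₀ σ₀ z * q z.1 * (c * P β σ z) ^ γ)) ∧
    (γ * (∫ z, q z.1 * (cE * P β₀ σ₀ z) ^ (1 + γ)) -
        (1 + γ) * (∫ z, c₀ z.1 * P β₀ σ₀ z * q z.1 * (cE * P β₀ σ₀ z) ^ γ) =
      -(cE ^ (1 + γ) * σ₀ ^ (-γ) * (∫ z : ℝ, s z ^ (1 + γ)))) := by
  obtain rfl : P = fun β σ z => locScale s (F β z.1) σ z.2 :=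
    funext fun β => funext fun σ => funext (hP β σ)
  simp only [Measure.volume_eq_prod] at hint1 hint2 ⊢
  have hself0 : ∀ σ, 0 < σ → 0 ≤ σ ^ (-γ) * ∫ z, s z ^ (1 + γ) := fun σ hσ =>
    mul_nonneg (Real.rpow_nonneg hσ.le _) (integral_nonneg fun z => Real.rpow_nonneg (hs0 z) _)
  have hw0 : ∀ x, 0 ≤ c₀ x * q x := fun x => mul_nonneg (hc₀ x).1.le (hq0 x)
  have hcE0 : 0 ≤ cE := hcE ▸ integral_nonneg hw0
  have self_term : ∀ c β σ, 0 ≤ c → 0 < σ →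
      ∫ z, q z.1 * (c * locScale s (F β z.1) σ z.2) ^ (1 + γ) ∂volume.prod volume =
        c ^ (1 + γ) * (σ ^ (-γ) * ∫ z, s z ^ (1 + γ)) := fun c β σ hc hσ => by
    rw [integral_prod_mul_smul_locScale_rpow hs0 hc hσ (hint1 β σ hσ), hq1, one_mul,
      sub_add_cancel_left]
  refine ⟨fun c hc β σ hσ => ?_, ?_⟩
  · rw [self_term c β σ hc.le hσ, mul_assoc (cE ^ (1 + γ))]
    refine neg_le_power_score_of_le hγ hc.le hcE0 (hself0 σ hσ) (hself0 σ₀ hσ₀) ?_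
    rw [hcE]
    exact integral_prod_cross_locScale_le hγ hsm hs0 hsint hc.le hσ₀ hσ hw0 hc₀qint (hint2 β σ hσ)
  · rw [self_term cE β₀ σ₀ hcE0 hσ₀,
      integral_prod_cross_locScale_self (by positivity) hs0 hcE0 hσ₀ (hint2 β₀ σ₀ hσ₀), ← hcE,
      Real.rpow_one_add' hcE0 (by positivity)]
    ring

/-- Under heterogeneous contamination with ratio function `c₀(x)`, for the
location-scale family `p_θ(y|x) = (1/σ)s((y − f_β(x))/σ)` with target `p₀ = p_{θ₀}`,
the conditional density-power score satisfies, for every `c > 0` and `θ = (β,σ)`,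
`S_power(c₀p₀, c·p_θ; q) ≥ −(∫c₀ q)^{1+γ}·σ₀^{−γ}·∫s^{1+γ}`, with equality at
`θ = θ₀`, `c = ∫ c₀(x)q(x)dx`. -/
theorem heterogeneous_location_scale_optimal_solution
    {m d : ℕ} (γ : ℝ) (hγ : 0 < γ)
    (s : ℝ → ℝ) (hsm : Measurable s) (hs0 : ∀ z, 0 ≤ s z)
    (hsi : Integrable s) (hs1 : (∫ z, s z) = 1)
    (hsmean : (∫ z : ℝ, z * s z) = 0) (hsvar : (∫ z : ℝ, z ^ 2 * s z) = 1)
    (hsint : Integrable (fun z => s z ^ (1 + γ)))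
    (hspos : 0 < ∫ z, s z ^ (1 + γ))
    (q : (Fin m → ℝ) → ℝ)
    (hqm : Measurable q) (hq0 : ∀ x, 0 ≤ q x)
    (hqi : Integrable q) (hq1 : (∫ x, q x) = 1)
    (c₀ : (Fin m → ℝ) → ℝ) (hc₀m : Measurable c₀)
    (hc₀ : ∀ x, c₀ x ∈ Set.Ioc (0 : ℝ) 1)
    (hc₀qint : Integrable (fun x => c₀ x * q x))
    (F : (Fin d → ℝ) → (Fin m → ℝ) → ℝ) (hFm : ∀ β, Measurable (F β))
    (β₀ : Fin d → ℝ) (σ₀ : ℝ) (hσ₀ : 0 < σ₀)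
    (P : (Fin d → ℝ) → ℝ → ((Fin m → ℝ) × ℝ) → ℝ)
    (hP : ∀ β σ z, P β σ z = σ⁻¹ * s ((z.2 - F β z.1) / σ))
    (hint1 : ∀ β σ, 0 < σ →
      Integrable (fun z : (Fin m → ℝ) × ℝ => q z.1 * P β σ z ^ (1 + γ)))
    (hint2 : ∀ β σ, 0 < σ →
      Integrable (fun z : (Fin m → ℝ) × ℝ =>
        c₀ z.1 * P β₀ σ₀ z * q z.1 * P β σ z ^ γ))
    (cE : ℝ) (hcE : cE = ∫ x, c₀ x * q x) :
    (∀ c : ℝ, 0 < c → ∀ β : Fin d → ℝ, ∀ σ : ℝ, 0 < σ →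
      -(cE ^ (1 + γ) * σ₀ ^ (-γ) * (∫ z : ℝ, s z ^ (1 + γ))) ≤
        γ * (∫ z, q z.1 * (c * P β σ z) ^ (1 + γ)) -
          (1 + γ) * (∫ z, c₀ z.1 * P β₀ σ₀ z * q z.1 * (c * P β σ z) ^ γ)) ∧
    (γ * (∫ z, q z.1 * (cE * P β₀ σ₀ z) ^ (1 + γ)) -
        (1 + γ) * (∫ z, c₀ z.1 * P β₀ σ₀ z * q z.1 * (cE * P β₀ σ₀ z) ^ γ) =
      -(cE ^ (1 + γ) * σ₀ ^ (-γ) * (∫ z : ℝ, s z ^ (1 + γ)))) :=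
  heterogeneous_location_scale_optimal_solution_general γ hγ s hsm hs0 hsint q hq0 hq1 c₀ hc₀
    hc₀qint F β₀ σ₀ hσ₀ P hP hint1 hint2 cE hcE
end
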